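/- arXiv:math/0104050 — 4 statements merged into one kernel-verified Lean document; each statement's English description precedes it below -/
import Mathlib

section
/- Let W be the Weyl group of a root system Σ in a Euclidean space a, let a_P ⊂ a be the kernel of a single root α ∈ Σ (so that the stabilizer W_P of a_P pointwise is {1, s_α}), and let a_Q ⊂ a be any subspace. If s, t ∈ W satisfy sλ|_{a_P} = tλ|_{a_P} for all λ vanishing on the orthocomplement of a_Q (i.e. all λ ∈ a_Q^*), then W_P s W_Q = W_P t W_Q, where W_Q is the pointwise stabilizer in W of a_Q. In other words, the natural projection W_P\W/W_Q → W/~_{P|Q} is injective when a_P has codimension 1. -/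
open scoped RealInnerProductSpace

variable {E : Type*} [NormedAddCommGroup E] [InnerProductSpace ℝ E] [FiniteDimensional ℝ E]

/-- The orthogonal reflection `s_α` in the hyperplane `α^⊥`. -/
noncomputable def rootReflection (α : E) : E ≃ₗᵢ[ℝ] E :=
  Submodule.reflection ((ℝ ∙ α)ᗮ)

/-- The Weyl group of `Σ`: the group generated by the reflections in the roots. -/
noncomputable def weylGroup (S : Finset E) : Subgroup (E ≃ₗᵢ[ℝ] E) :=
  Subgroup.closure {g | ∃ α ∈ S, g = rootReflection α}

/-!
The hypothesis says that `sv` and `tv` have the same inner products with `α^⊥` for every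
`v ∈ a_Q`, i.e. `sv - tv ∈ ℝα`. Since also `‖sv‖ = ‖tv‖`, either `sv = tv` or `sv + tv ⊥ α`,
and in the latter case `sv = s_α(tv)`. A subspace covered by two subspaces lies in one of them,
so `s = t` or `s = s_α t` on all of `a_Q`, and then `t ∈ W_P s W_Q` with `W_P ∋ 1, s_α`.
-/

section

variable {F : Type*} [NormedAddCommGroup F] [InnerProductSpace ℝ F]

def pointwiseStabilizer (V : Submodule ℝ F) : Subgroup (F ≃ₗᵢ[ℝ] F) where
  carrier := {g | ∀ x ∈ V, g x = x}
  mul_mem' {g h} hg hh x hx := by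
    rw [LinearIsometryEquiv.coe_mul, Function.comp_apply, hh x hx, hg x hx]
  one_mem' _ _ := rfl
  inv_mem' {g} hg x hx := by
    rw [LinearIsometryEquiv.coe_inv, LinearIsometryEquiv.symm_apply_eq, hg x hx]

theorem mem_pointwiseStabilizer {V : Submodule ℝ F} {g : F ≃ₗᵢ[ℝ] F} :
    g ∈ pointwiseStabilizer V ↔ ∀ x ∈ V, g x = x :=
  Iff.rfl

theorem setOf_exists_eq_mul_mul_eq_doubleCoset (W : Subgroup (F ≃ₗᵢ[ℝ] F))
    (U V : Submodule ℝ F) (s : F ≃ₗᵢ[ℝ] F) :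
    {u : F ≃ₗᵢ[ℝ] F | ∃ p q : F ≃ₗᵢ[ℝ] F, p ∈ W ∧ (∀ x ∈ U, p x = x) ∧
        q ∈ W ∧ (∀ x ∈ V, q x = x) ∧ u = p * s * q} =
      DoubleCoset.doubleCoset s (W ⊓ pointwiseStabilizer U : Subgroup _)
        (W ⊓ pointwiseStabilizer V : Subgroup _) := by
  ext u
  simp only [Set.mem_ofPred_eq, DoubleCoset.mem_doubleCoset, SetLike.mem_coe, Subgroup.mem_inf,
    mem_pointwiseStabilizer, exists_and_left, and_assoc]

theorem mem_doubleCoset_of_forall_apply_eq {W P : Subgroup (F ≃ₗᵢ[ℝ] F)} {V : Submodule ℝ F}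
    {p s t : F ≃ₗᵢ[ℝ] F} (hpP : p ∈ P) (hpW : p ∈ W) (hs : s ∈ W) (ht : t ∈ W)
    (h : ∀ v ∈ V, s v = p (t v)) :
    t ∈ DoubleCoset.doubleCoset s P (W ⊓ pointwiseStabilizer V : Subgroup _) := by
  have hqW : s⁻¹ * p * t ∈ W := W.mul_mem (W.mul_mem (W.inv_mem hs) hpW) ht
  refine DoubleCoset.mem_doubleCoset.mpr
    ⟨p⁻¹, P.inv_mem hpP, s⁻¹ * p * t, Subgroup.mem_inf.mpr ⟨hqW, fun v hv => ?_⟩, by group⟩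
  rw [LinearIsometryEquiv.coe_mul, LinearIsometryEquiv.coe_mul, Function.comp_apply,
    Function.comp_apply, ← h v hv, LinearIsometryEquiv.coe_inv, s.symm_apply_apply]

theorem Submodule.forall_or_forall_of_forall_eq_or_eq {R M N : Type*} [Ring R] [AddCommGroup M]
    [Module R M] [AddCommGroup N] [Module R N] (p : Submodule R M) (f g h : M →ₗ[R] N)
    (H : ∀ v ∈ p, f v = g v ∨ f v = h v) :
    (∀ v ∈ p, f v = g v) ∨ ∀ v ∈ p, f v = h v :=
  AddSubgroupClass.subset_union (K := LinearMap.eqLocus f g) (L := LinearMap.eqLocus f h) |>.mp H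

theorem apply_sub_apply_mem_orthogonal {aQ K : Submodule ℝ F} {s t : F ≃ₗᵢ[ℝ] F}
    (h : ∀ lam : F →ₗ[ℝ] ℝ, (∀ w ∈ aQᗮ, lam w = 0) → ∀ x ∈ K, lam (s⁻¹ x) = lam (t⁻¹ x))
    {v : F} (hv : v ∈ aQ) : s v - t v ∈ Kᗮ := by
  refine (Submodule.mem_orthogonal' _ _).mpr fun x hx => ?_
  have hvx := h (innerₛₗ ℝ v) (fun w hw => Submodule.inner_right_of_mem_orthogonal hv hw) x hx
  change ⟪v, s.symm x⟫ = ⟪v, t.symm x⟫ at hvx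
  rw [← LinearIsometryEquiv.inner_map_eq_flip, ← LinearIsometryEquiv.inner_map_eq_flip] at hvx
  rw [inner_sub_left, hvx, sub_self]

theorem eq_or_add_mem_orthogonal_of_sub_mem_span {α x y : F} (hxy : x - y ∈ ℝ ∙ α)
    (hnorm : ‖x‖ = ‖y‖) : x = y ∨ x + y ∈ (ℝ ∙ α)ᗮ := by
  obtain ⟨c, hc⟩ := Submodule.mem_span_singleton.mp hxy
  have hperp := (real_inner_add_sub_eq_zero_iff x y).mpr hnorm
  rw [← hc, real_inner_comm, real_inner_smul_left] at hperp
  rcases mul_eq_zero.mp hperp with hc0 | hαxy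
  · rw [hc0, zero_smul, eq_comm, sub_eq_zero] at hc
    exact Or.inl hc
  · exact Or.inr (Submodule.mem_orthogonal_singleton_iff_inner_right.mpr hαxy)

theorem Submodule.reflection_eq_of_sub_mem_orthogonal_of_add_mem (K : Submodule ℝ F)
    [K.HasOrthogonalProjection] {x y : F} (hsub : x - y ∈ Kᗮ) (hadd : x + y ∈ K) :
    K.reflection y = x := by
  have hy : y = (2⁻¹ : ℝ) • (x + y) - (2⁻¹ : ℝ) • (x - y) := by module
  conv_lhs => rw [hy]
  rw [map_sub, map_smul, map_smul, reflection_mem_subspace_eq_self hadd,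
    reflection_mem_subspace_orthogonalComplement_eq_neg hsub]
  module

theorem eq_or_eq_rootReflection_of_sub_mem_span {α x y : F} (hxy : x - y ∈ ℝ ∙ α)
    (hnorm : ‖x‖ = ‖y‖) : x = y ∨ x = rootReflection α y :=
  (eq_or_add_mem_orthogonal_of_sub_mem_span hxy hnorm).imp_right fun hadd =>
    ((ℝ ∙ α)ᗮ.reflection_eq_of_sub_mem_orthogonal_of_add_mem
      (Submodule.le_orthogonal_orthogonal _ hxy) hadd).symm

theorem forall_eq_or_forall_eq_rootReflection {α : F} {aQ : Submodule ℝ F} {s t : F ≃ₗᵢ[ℝ] F}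
    (h : ∀ lam : F →ₗ[ℝ] ℝ, (∀ w ∈ aQᗮ, lam w = 0) →
      ∀ x ∈ (ℝ ∙ α)ᗮ, lam (s⁻¹ x) = lam (t⁻¹ x)) :
    (∀ v ∈ aQ, s v = t v) ∨ ∀ v ∈ aQ, s v = rootReflection α (t v) := by
  refine aQ.forall_or_forall_of_forall_eq_or_eq s.toLinearMap t.toLinearMap
    ((rootReflection α).toLinearMap ∘ₗ t.toLinearMap) fun v hv => ?_
  have hsub := apply_sub_apply_mem_orthogonal h hv
  rw [Submodule.orthogonal_orthogonal] at hsub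
  exact eq_or_eq_rootReflection_of_sub_mem_span hsub (by simp)

end

theorem double_coset_determined_on_codim_one_general
    (S : Finset E)
    (α : E) (hα : α ∈ S) (aQ : Submodule ℝ E)
    (s t : E ≃ₗᵢ[ℝ] E) (hs : s ∈ weylGroup S) (ht : t ∈ weylGroup S)
    (hyp : ∀ lam : E →ₗ[ℝ] ℝ, (∀ w ∈ aQᗮ, lam w = 0) →
      ∀ x ∈ (ℝ ∙ α)ᗮ, lam (s⁻¹ x) = lam (t⁻¹ x)) :
    {u : E ≃ₗᵢ[ℝ] E | ∃ p q : E ≃ₗᵢ[ℝ] E,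
        p ∈ weylGroup S ∧ (∀ x ∈ (ℝ ∙ α)ᗮ, p x = x) ∧
        q ∈ weylGroup S ∧ (∀ x ∈ aQ, q x = x) ∧ u = p * s * q} =
    {u : E ≃ₗᵢ[ℝ] E | ∃ p q : E ≃ₗᵢ[ℝ] E,
        p ∈ weylGroup S ∧ (∀ x ∈ (ℝ ∙ α)ᗮ, p x = x) ∧
        q ∈ weylGroup S ∧ (∀ x ∈ aQ, q x = x) ∧ u = p * t * q} := by
  have hσW : rootReflection α ∈ weylGroup S := Subgroup.subset_closure ⟨α, hα, rfl⟩
  have hσP : rootReflection α ∈ weylGroup S ⊓ pointwiseStabilizer (ℝ ∙ α)ᗮ :=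
    ⟨hσW, fun _ hx => Submodule.reflection_mem_subspace_eq_self hx⟩
  rw [setOf_exists_eq_mul_mul_eq_doubleCoset, setOf_exists_eq_mul_mul_eq_doubleCoset]
  refine (DoubleCoset.doubleCoset_eq_of_mem ?_).symm
  rcases forall_eq_or_forall_eq_rootReflection hyp with h | h
  · exact mem_doubleCoset_of_forall_apply_eq (P := weylGroup S ⊓ _) (one_mem _) (one_mem _) hs ht h
  · exact mem_doubleCoset_of_forall_apply_eq hσP hσW hs ht h

/-- Let `Σ` be a root system in a Euclidean space with Weyl group `W`, let `a_P = ker α`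
for a root `α` and `a_Q` any subspace.  If `s, t ∈ W` satisfy `sλ = tλ` on `a_P` for every
`λ ∈ a_Q^*` (i.e. every functional vanishing on `a_Q^⊥`), then `W_P s W_Q = W_P t W_Q`,
where `W_P` and `W_Q` are the pointwise stabilizers in `W` of `a_P` and `a_Q`. -/
theorem double_coset_determined_on_codim_one
    (S : Finset E) (hne : ∀ α ∈ S, α ≠ 0)
    (hrefl : ∀ α ∈ S, ∀ β ∈ S, rootReflection α β ∈ S)
    (hcrys : ∀ α ∈ S, ∀ β ∈ S, ∃ k : ℤ, 2 * ⟪α, β⟫ = (k : ℝ) * ⟪α, α⟫)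
    (hspan : Submodule.span ℝ (S : Set E) = ⊤)
    (α : E) (hα : α ∈ S) (aQ : Submodule ℝ E)
    (s t : E ≃ₗᵢ[ℝ] E) (hs : s ∈ weylGroup S) (ht : t ∈ weylGroup S)
    (hyp : ∀ lam : E →ₗ[ℝ] ℝ, (∀ w ∈ aQᗮ, lam w = 0) →
      ∀ x ∈ (ℝ ∙ α)ᗮ, lam (s⁻¹ x) = lam (t⁻¹ x)) :
    {u : E ≃ₗᵢ[ℝ] E | ∃ p q : E ≃ₗᵢ[ℝ] E,
        p ∈ weylGroup S ∧ (∀ x ∈ (ℝ ∙ α)ᗮ, p x = x) ∧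
        q ∈ weylGroup S ∧ (∀ x ∈ aQ, q x = x) ∧ u = p * s * q} =
    {u : E ≃ₗᵢ[ℝ] E | ∃ p q : E ≃ₗᵢ[ℝ] E,
        p ∈ weylGroup S ∧ (∀ x ∈ (ℝ ∙ α)ᗮ, p x = x) ∧
        q ∈ weylGroup S ∧ (∀ x ∈ aQ, q x = x) ∧ u = p * t * q} :=
  double_coset_determined_on_codim_one_general S α hα aQ s t hs ht hyp
end

section
/- Let a be a finite-dimensional real vector space, Δ a linearly independent subset of the dual a^*, and A = a with 'A^+(Δ, a_0)' = { X ∈ a : α(X) > α(X_0) for all α ∈ Δ } for a fixed X_0 ∈ a. Let V be a complete locally convex space and suppose the Δ-power series Σ_{μ ∈ NΔ} c_μ e^{−μ(X)} (c_μ ∈ V, NΔ the set of N-linear combinations of Δ) converges absolutely at X = X_0. Then it converges absolutely and uniformly on the closure of A^+(Δ, X_0). -/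
/-! On the closure of `A⁺(Δ, X₀)` every `α ∈ Δ` satisfies `α(X₀) ≤ α(X)`, and each `μ ∈ ℕΔ`
has nonnegative coefficients, so `e^{-μ(X)} ≤ e^{-μ(X₀)}` there. Hence the series of suprema is
dominated termwise by the series that converges absolutely at `X₀`. -/

theorem closure_setOf_forall_lt_subset {X ι α : Type*} [TopologicalSpace X] [LinearOrder α]
    [TopologicalSpace α] [OrderClosedTopology α] (s : Set ι) (f : ι → X → α)
    (hf : ∀ i ∈ s, Continuous (f i)) (x₀ : X) :
    closure {x | ∀ i ∈ s, f i x₀ < f i x} ⊆ {x | ∀ i ∈ s, f i x₀ ≤ f i x} := fun _ hx i hi =>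
  closure_lt_subset_le continuous_const (hf i hi)
    (closure_mono (fun _ hy => (hy : ∀ j ∈ s, f j x₀ < f j _) i hi) hx)

theorem Real.exp_neg_sum_mul_le_of_le {ι : Type*} (t : Finset ι) {w u v : ι → ℝ}
    (hw : ∀ i ∈ t, 0 ≤ w i) (huv : ∀ i ∈ t, u i ≤ v i) :
    Real.exp (-∑ i ∈ t, w i * v i) ≤ Real.exp (-∑ i ∈ t, w i * u i) :=
  Real.exp_le_exp.2 <| neg_le_neg <| Finset.sum_le_sum fun i hi =>
    mul_le_mul_of_nonneg_left (huv i hi) (hw i hi)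

theorem Real.biSup_le {X : Type*} {s : Set X} {f : X → ℝ} {B : ℝ} (hB : 0 ≤ B)
    (h : ∀ x ∈ s, f x ≤ B) : ⨆ x ∈ s, f x ≤ B :=
  Real.iSup_le (fun x => Real.iSup_le (h x) hB) hB

theorem Real.biSup_nonneg {X : Type*} {s : Set X} {f : X → ℝ} (h : ∀ x, 0 ≤ f x) :
    0 ≤ ⨆ x ∈ s, f x :=
  Real.iSup_nonneg fun x => Real.iSup_nonneg fun _ => h x

theorem iSup_closure_exp_neg_le {a : Type*} [NormedAddCommGroup a] [NormedSpace ℝ a]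
    [FiniteDimensional ℝ a] (Δ : Finset (a →ₗ[ℝ] ℝ)) (X₀ : a) (m : Δ → ℕ) :
    ⨆ X ∈ closure {X : a | ∀ α ∈ Δ, α X₀ < α X}, Real.exp (-∑ α : Δ, (m α : ℝ) * α.1 X) ≤
      Real.exp (-∑ α : Δ, (m α : ℝ) * α.1 X₀) := by
  refine Real.biSup_le (Real.exp_pos _).le fun X hX => ?_
  have hle := closure_setOf_forall_lt_subset (Δ : Set (a →ₗ[ℝ] ℝ)) (fun α X => α X)
    (fun α _ => LinearMap.continuous_of_finiteDimensional α) X₀ hX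
  exact Real.exp_neg_sum_mul_le_of_le _ (fun α _ => Nat.cast_nonneg _)
    fun α _ => hle α.1 α.2

theorem power_series_uniform_abs_convergence_general
    {a : Type*} [NormedAddCommGroup a] [NormedSpace ℝ a] [FiniteDimensional ℝ a]
    {V : Type*} [AddCommGroup V] [Module ℝ V] [UniformSpace V]
    (Δ : Finset (a →ₗ[ℝ] ℝ))
    (c : ({x : a →ₗ[ℝ] ℝ // x ∈ Δ} → ℕ) → V) (X₀ : a)
    (habs : ∀ p : Seminorm ℝ V, Continuous p →
      Summable fun m : {x : a →ₗ[ℝ] ℝ // x ∈ Δ} → ℕ =>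
        p (c m) * Real.exp (-∑ α : {x : a →ₗ[ℝ] ℝ // x ∈ Δ}, (m α : ℝ) * α.1 X₀)) :
    ∀ p : Seminorm ℝ V, Continuous p →
      Summable fun m : {x : a →ₗ[ℝ] ℝ // x ∈ Δ} → ℕ =>
        p (c m) * ⨆ X ∈ closure {X : a | ∀ α ∈ Δ, α X₀ < α X},
          Real.exp (-∑ α : {x : a →ₗ[ℝ] ℝ // x ∈ Δ}, (m α : ℝ) * α.1 X) := fun p hp =>
  (habs p hp).of_nonneg_of_le
    (fun _ => mul_nonneg (apply_nonneg p _) (Real.biSup_nonneg fun _ => (Real.exp_pos _).le))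
    (fun m => mul_le_mul_of_nonneg_left (iSup_closure_exp_neg_le Δ X₀ m) (apply_nonneg p _))

/-- Suppose the `Δ`-power series `∑_{μ ∈ ℕΔ} c_μ e^{−μ(X)}` (coefficients `c_μ` in a
complete locally convex space `V`, `Δ` a linearly independent subset of `a^*`) converges
absolutely at `X₀`, i.e. `∑_μ p(c_μ) e^{−μ(X₀)} < ∞` for every continuous seminorm `p`.
Then it converges absolutely and uniformly on the closure of
`A⁺(Δ, X₀) = {X : α(X) > α(X₀) ∀ α ∈ Δ}`, in the sense that
`∑_μ p(c_μ) · sup_{X ∈ closure A⁺} e^{−μ(X)} < ∞` for every continuous seminorm `p`. -/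
theorem power_series_uniform_abs_convergence
    {a : Type*} [NormedAddCommGroup a] [NormedSpace ℝ a] [FiniteDimensional ℝ a]
    {V : Type*} [AddCommGroup V] [Module ℝ V] [UniformSpace V] [IsUniformAddGroup V]
    [ContinuousSMul ℝ V] [LocallyConvexSpace ℝ V] [CompleteSpace V] [T2Space V]
    (Δ : Finset (a →ₗ[ℝ] ℝ))
    (hΔ : LinearIndependent ℝ (fun α : {x : a →ₗ[ℝ] ℝ // x ∈ Δ} => α.1))
    (c : ({x : a →ₗ[ℝ] ℝ // x ∈ Δ} → ℕ) → V) (X₀ : a)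
    (habs : ∀ p : Seminorm ℝ V, Continuous p →
      Summable fun m : {x : a →ₗ[ℝ] ℝ // x ∈ Δ} → ℕ =>
        p (c m) * Real.exp (-∑ α : {x : a →ₗ[ℝ] ℝ // x ∈ Δ}, (m α : ℝ) * α.1 X₀)) :
    ∀ p : Seminorm ℝ V, Continuous p →
      Summable fun m : {x : a →ₗ[ℝ] ℝ // x ∈ Δ} → ℕ =>
        p (c m) * ⨆ X ∈ closure {X : a | ∀ α ∈ Δ, α X₀ < α X},
          Real.exp (-∑ α : {x : a →ₗ[ℝ] ℝ // x ∈ Δ}, (m α : ℝ) * α.1 X) :=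
  power_series_uniform_abs_convergence_general Δ c X₀ habs
end

section
/- Let V be a finite-dimensional real inner product space, X a finite subset of V \ {0}, and a ∈ V_C. Let M(a,X) be the ring of germs at a of meromorphic functions whose singular locus at a is contained in the union of X-hyperplanes through a. Then for every d : X → N and every u ∈ S(V) (constant-coefficient holomorphic differential operator) there exists an X-Laurent functional L at a whose d-component equals u; i.e. L φ = u(π_{a,d} φ)(a) for all φ ∈ π_{a,d}^{-1} O_a, where π_{a,d}(z) = Π_{ξ∈X} ⟨ξ, z−a⟩^{d(ξ)}. In particular, for every a there exists L ∈ M(a,X)*_laur with Lφ = φ(a) for all germs φ holomorphic at a. -/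
namespace LaurentFunctionals

variable {n : ℕ}

/-- The complex bilinear pairing `⟨ξ, z⟩` of `ξ ∈ ℝⁿ` with `z ∈ ℂⁿ`. -/
noncomputable def cpair (ξ : Fin n → ℝ) (z : Fin n → ℂ) : ℂ := ∑ i, (ξ i : ℂ) * z i

/-- The germ filter at `a`: neighborhoods of `a` intersected with the complement of the
union of the `X`-hyperplanes through `a`.  Germs of meromorphic functions at `a` with
singular locus along these hyperplanes are germs of functions along this filter. -/
noncomputable def germFilter (X : Finset (Fin n → ℝ)) (a : Fin n → ℂ) :
    Filter (Fin n → ℂ) :=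
  nhds a ⊓ Filter.principal {z | ∀ ξ ∈ X, cpair ξ (z - a) ≠ 0}

/-- The polynomial `π_{a,d}(z) = ∏_{ξ ∈ X} ⟨ξ, z − a⟩^{d ξ}`. -/
noncomputable def piPoly (X : Finset (Fin n → ℝ)) (a : Fin n → ℂ)
    (d : (Fin n → ℝ) → ℕ) : (Fin n → ℂ) → ℂ :=
  fun z => ∏ ξ ∈ X, cpair ξ (z - a) ^ d ξ

/-- The meromorphic function `π_{a,d}⁻¹ · g`. -/
noncomputable def mero (X : Finset (Fin n → ℝ)) (a : Fin n → ℂ)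
    (d : (Fin n → ℝ) → ℕ) (g : (Fin n → ℂ) → ℂ) : (Fin n → ℂ) → ℂ :=
  fun z => (piPoly X a d z)⁻¹ * g z

/-- `O_a`: germs at `a` of holomorphic functions. -/
def Oa (X : Finset (Fin n → ℝ)) (a : Fin n → ℂ) :
    Set (Filter.Germ (germFilter X a) ℂ) :=
  {φ | ∃ g : (Fin n → ℂ) → ℂ, AnalyticAt ℂ g a ∧
    φ = (g : Filter.Germ (germFilter X a) ℂ)}

/-- `M(a, X)`: germs at `a` of meromorphic functions whose singular locus at `a` lies in
the union of the `X`-hyperplanes through `a`; equivalently `∪_d π_{a,d}⁻¹ O_a`. -/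
def Ma (X : Finset (Fin n → ℝ)) (a : Fin n → ℂ) :
    Set (Filter.Germ (germFilter X a) ℂ) :=
  {φ | ∃ (d : (Fin n → ℝ) → ℕ) (g : (Fin n → ℂ) → ℂ), AnalyticAt ℂ g a ∧
    φ = (mero X a d g : Filter.Germ (germFilter X a) ℂ)}

/-- The directional derivative operator `∂_v`. -/
noncomputable def dirD (v : Fin n → ℂ) (g : (Fin n → ℂ) → ℂ) : (Fin n → ℂ) → ℂ :=
  fun z => fderiv ℂ g z v

/-- The composition of directional derivatives along the word `w`. -/
noncomputable def applyWord (w : List (Fin n → ℂ)) (g : (Fin n → ℂ) → ℂ) :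
    (Fin n → ℂ) → ℂ :=
  w.foldr dirD g

/-- The action of an element `u ∈ S(V)` — a complex linear combination of words of
directional derivatives — on a function. -/
noncomputable def applyOp (u : List (ℂ × List (Fin n → ℂ))) (g : (Fin n → ℂ) → ℂ)
    (z : Fin n → ℂ) : ℂ :=
  (u.map fun p => p.1 * applyWord p.2 g z).sum

/-- `L` is an `X`-Laurent functional at `a`: a linear functional on `M(a, X)` such that
for every `d : X → ℕ` there is `u_d ∈ S(V)` with `L φ = u_d(π_{a,d} φ)(a)` for all
`φ ∈ π_{a,d}⁻¹ O_a`. -/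
def IsLaurentAt (X : Finset (Fin n → ℝ)) (a : Fin n → ℂ)
    (L : Filter.Germ (germFilter X a) ℂ → ℂ) : Prop :=
  (∀ φ ψ : Filter.Germ (germFilter X a) ℂ, φ ∈ Ma X a → ψ ∈ Ma X a →
    L (φ + ψ) = L φ + L ψ) ∧
  (∀ (z : ℂ) (φ : Filter.Germ (germFilter X a) ℂ), φ ∈ Ma X a →
    L (z • φ) = z * L φ) ∧
  (∀ d : (Fin n → ℝ) → ℕ, ∃ u : List (ℂ × List (Fin n → ℂ)),
    ∀ g : (Fin n → ℂ) → ℂ, AnalyticAt ℂ g a →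
      L (mero X a d g : Filter.Germ (germFilter X a) ℂ) = applyOp u g a)


/-!
Let `Λ = ∏_{ξ ∈ X} ⟨ξ, · - a⟩`. For `ξ ≠ 0` every `u ∈ S(V)` factors at `a` through multiplication
by `⟨ξ, · - a⟩`: choose `s` with `⟨ξ, s⟩ = 1`, rewrite `u` as a combination of `∂ₛᵏ ∂_P` with
`P ⊆ ker ξ`, and invert the one-variable identity `∂ₛᵏ⁺¹(⟨ξ, · - a⟩ g)(a) = (k + 1) ∂ₛᵏ g(a)`.
Iterating yields operators `T k` with `T 0 = u` and `T (k + 1) (Λ ·) = T k`, so that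
`L (π_{a, d + k}⁻¹ G) = T k G` is well defined on `M(a, X)`: holomorphic germs that agree off the
hyperplanes agree, the complement of the hyperplanes being dense. The `d'`-component of `L` is
`T k (π_{a, d + k - d'} ·)`, again an operator by the Leibniz rule.
-/

open Filter Topology

section Pairing

variable (ξ : Fin n → ℝ) (a : Fin n → ℂ)

noncomputable def cpairL : (Fin n → ℂ) →L[ℂ] ℂ :=
  ∑ i, (ξ i : ℂ) • ContinuousLinearMap.proj i

@[simp]
theorem cpairL_apply (z : Fin n → ℂ) : cpairL ξ z = cpair ξ z := by
  simp [cpairL, cpair]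

variable {ξ} in
theorem exists_cpair_eq_one (hξ : ξ ≠ 0) : ∃ s : Fin n → ℂ, cpair ξ s = 1 := by
  obtain ⟨i, hi⟩ := Function.ne_iff.1 hξ
  refine ⟨Pi.single i (ξ i : ℂ)⁻¹, ?_⟩
  simp [cpair, Pi.single_apply, mul_inv_cancel₀ (Complex.ofReal_ne_zero.2 hi)]

noncomputable def affineForm : (Fin n → ℂ) → ℂ := fun z => cpair ξ (z - a)

theorem affineForm_eq : affineForm ξ a = fun z => cpairL ξ z - cpairL ξ a := by
  funext z
  rw [affineForm, ← cpairL_apply, map_sub]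

@[simp]
theorem affineForm_self : affineForm ξ a a = 0 := by
  simp [affineForm_eq]

theorem hasFDerivAt_affineForm (z : Fin n → ℂ) : HasFDerivAt (affineForm ξ a) (cpairL ξ) z := by
  rw [affineForm_eq]
  exact (cpairL ξ).hasFDerivAt.sub_const _

theorem analyticAt_affineForm (z : Fin n → ℂ) : AnalyticAt ℂ (affineForm ξ a) z := by
  rw [affineForm_eq]
  exact ((cpairL ξ).analyticAt z).sub analyticAt_const

end Pairing

section Derivatives

variable {z : Fin n → ℂ} {f g : (Fin n → ℂ) → ℂ}

theorem dirD_affineForm (ξ : Fin n → ℝ) (a v : Fin n → ℂ) :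
    dirD v (affineForm ξ a) z = cpair ξ v := by
  simp [dirD, (hasFDerivAt_affineForm ξ a z).fderiv]

theorem analyticAt_dirD (v : Fin n → ℂ) (hf : AnalyticAt ℂ f z) : AnalyticAt ℂ (dirD v f) z :=
  (ContinuousLinearMap.apply ℂ ℂ v).analyticAt _ |>.comp hf.fderiv

theorem dirD_congr (v : Fin n → ℂ) (h : f =ᶠ[𝓝 z] g) : dirD v f =ᶠ[𝓝 z] dirD v g :=
  (h.fderiv (𝕜 := ℂ)).mono fun y hy => by simp only [dirD, hy]

theorem dirD_add (v : Fin n → ℂ) (hf : DifferentiableAt ℂ f z) (hg : DifferentiableAt ℂ g z) :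
    dirD v (f + g) z = dirD v f z + dirD v g z := by
  simp [dirD, fderiv_add hf hg]

theorem dirD_mul (v : Fin n → ℂ) (hf : DifferentiableAt ℂ f z) (hg : DifferentiableAt ℂ g z) :
    dirD v (f * g) z = dirD v f z * g z + f z * dirD v g z := by
  simp only [dirD, fderiv_mul hf hg, add_apply, smul_apply, smul_eq_mul]
  ring

theorem dirD_const_smul (v : Fin n → ℂ) (c : ℂ) : dirD v (c • f) = c • dirD v f := by
  ext y
  simp [dirD, fderiv_const_smul_field]

theorem dirD_comm (v w : Fin n → ℂ) (hf : AnalyticAt ℂ f z) :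
    dirD v (dirD w f) z = dirD w (dirD v f) z := by
  have key : ∀ v w : Fin n → ℂ, dirD v (dirD w f) z = fderiv ℂ (fderiv ℂ f) z v w := fun v w =>
    congrArg (· v) ((ContinuousLinearMap.apply ℂ ℂ w).hasFDerivAt.comp z
      hf.fderiv.differentiableAt.hasFDerivAt).fderiv
  rw [key, key, (hf.contDiffAt (n := 2)).isSymmSndFDerivAt (by norm_num) v w]

theorem analyticAt_applyWord (w : List (Fin n → ℂ)) (hf : AnalyticAt ℂ f z) :
    AnalyticAt ℂ (applyWord w f) z := by
  induction w with
  | nil => exact hf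
  | cons v w ih => exact analyticAt_dirD v ih

theorem applyWord_cons (v : Fin n → ℂ) (w : List (Fin n → ℂ)) :
    applyWord (v :: w) f = dirD v (applyWord w f) := rfl

theorem applyWord_append (w₁ w₂ : List (Fin n → ℂ)) :
    applyWord (w₁ ++ w₂) f = applyWord w₁ (applyWord w₂ f) := by
  simp [applyWord, List.foldr_append]

theorem applyWord_congr (w : List (Fin n → ℂ)) (h : f =ᶠ[𝓝 z] g) :
    applyWord w f =ᶠ[𝓝 z] applyWord w g := by
  induction w with
  | nil => exact h
  | cons v w ih => exact dirD_congr v ih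

theorem applyWord_const_smul (w : List (Fin n → ℂ)) (c : ℂ) :
    applyWord w (c • f) = c • applyWord w f := by
  induction w with
  | nil => rfl
  | cons v w ih => rw [applyWord_cons, ih, dirD_const_smul]; rfl

theorem applyWord_add (w : List (Fin n → ℂ)) (hf : AnalyticAt ℂ f z) (hg : AnalyticAt ℂ g z) :
    applyWord w (f + g) =ᶠ[𝓝 z] applyWord w f + applyWord w g := by
  induction w generalizing z with
  | nil => rfl
  | cons v w ih =>
    filter_upwards [hf.eventually_analyticAt, hg.eventually_analyticAt] with y hfy hgy
    rw [applyWord_cons, (dirD_congr v (ih hfy hgy)).eq_of_nhds]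
    exact dirD_add v (analyticAt_applyWord w hfy).differentiableAt
      (analyticAt_applyWord w hgy).differentiableAt

theorem applyWord_perm {w₁ w₂ : List (Fin n → ℂ)} (hw : w₁.Perm w₂) (hf : AnalyticAt ℂ f z) :
    applyWord w₁ f =ᶠ[𝓝 z] applyWord w₂ f := by
  induction hw generalizing z with
  | nil => rfl
  | cons v _ ih => exact dirD_congr v (ih hf)
  | swap v w l =>
    filter_upwards [hf.eventually_analyticAt] with y hy
    exact dirD_comm w v (analyticAt_applyWord l hy)
  | trans _ _ ih₁ ih₂ => exact (ih₁ hf).trans (ih₂ hf)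

end Derivatives

section Operators

variable {z : Fin n → ℂ} {f g : (Fin n → ℂ) → ℂ}

theorem applyOp_cons (p : ℂ × List (Fin n → ℂ)) (u : List (ℂ × List (Fin n → ℂ))) :
    applyOp (p :: u) g z = p.1 * applyWord p.2 g z + applyOp u g z := by
  simp [applyOp]

theorem applyOp_cons_eq (p : ℂ × List (Fin n → ℂ)) (u : List (ℂ × List (Fin n → ℂ))) :
    applyOp (p :: u) g = p.1 • applyWord p.2 g + applyOp u g := by
  ext y
  simp [applyOp_cons]

theorem applyOp_append (u₁ u₂ : List (ℂ × List (Fin n → ℂ))) :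
    applyOp (u₁ ++ u₂) g z = applyOp u₁ g z + applyOp u₂ g z := by
  simp [applyOp]

theorem applyOp_replicate (k : ℕ) (c : ℂ) (w : List (Fin n → ℂ)) :
    applyOp (List.replicate k (c, w)) g z = k * c * applyWord w g z := by
  simp [applyOp, List.map_replicate, mul_assoc]

theorem applyOp_eq_zero {u : List (ℂ × List (Fin n → ℂ))} (hu : ∀ p ∈ u, p.1 = 0) :
    applyOp u g z = 0 := by
  induction u with
  | nil => rfl
  | cons p u ih =>
    rw [applyOp_cons, hu p (by simp), ih fun q hq => hu q (by simp [hq])]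
    ring

theorem analyticAt_applyOp (u : List (ℂ × List (Fin n → ℂ))) (hg : AnalyticAt ℂ g z) :
    AnalyticAt ℂ (applyOp u g) z := by
  induction u with
  | nil => exact analyticAt_const
  | cons p u ih =>
    rw [applyOp_cons_eq]
    exact ((analyticAt_applyWord p.2 hg).const_smul (c := p.1)).add ih

theorem applyOp_congr (u : List (ℂ × List (Fin n → ℂ))) (h : f =ᶠ[𝓝 z] g) :
    applyOp u f z = applyOp u g z := by
  simp only [applyOp, fun w : List (Fin n → ℂ) => (applyWord_congr w h).eq_of_nhds]

theorem applyOp_add (u : List (ℂ × List (Fin n → ℂ))) (hf : AnalyticAt ℂ f z)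
    (hg : AnalyticAt ℂ g z) : applyOp u (f + g) z = applyOp u f z + applyOp u g z := by
  induction u with
  | nil => simp [applyOp]
  | cons p u ih =>
    simp only [applyOp_cons, ih, (applyWord_add p.2 hf hg).eq_of_nhds, Pi.add_apply]
    ring

theorem applyOp_const_smul (u : List (ℂ × List (Fin n → ℂ))) (c : ℂ) :
    applyOp u (c • g) z = c * applyOp u g z := by
  induction u with
  | nil => simp [applyOp]
  | cons p u ih =>
    simp only [applyOp_cons, ih, applyWord_const_smul, Pi.smul_apply, smul_eq_mul]
    ring

theorem dirD_applyOp (v : Fin n → ℂ) (u : List (ℂ × List (Fin n → ℂ))) (hg : AnalyticAt ℂ g z) :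
    dirD v (applyOp u g) z = applyOp (u.map fun p => (p.1, v :: p.2)) g z := by
  induction u with
  | nil =>
    change dirD v (fun _ => 0) z = 0
    simp [dirD]
  | cons p u ih =>
    rw [applyOp_cons_eq, dirD_add v ((analyticAt_applyWord p.2 hg).differentiableAt.const_smul p.1)
      (analyticAt_applyOp u hg).differentiableAt, dirD_const_smul, List.map_cons, applyOp_cons,
      ih]
    rfl

end Operators

/-- `T` acts on functions holomorphic at `z` as `g ↦ u(g)(z)` for some `u ∈ S(V)`. -/
def IsDiffOpAt (z : Fin n → ℂ) (T : ((Fin n → ℂ) → ℂ) → ℂ) : Prop :=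
  ∃ u : List (ℂ × List (Fin n → ℂ)), ∀ g, AnalyticAt ℂ g z → T g = applyOp u g z

theorem isDiffOpAt_applyOp {z : Fin n → ℂ} (u : List (ℂ × List (Fin n → ℂ))) :
    IsDiffOpAt z fun g => applyOp u g z :=
  ⟨u, fun _ _ => rfl⟩

theorem isDiffOpAt_applyWord {z : Fin n → ℂ} (w : List (Fin n → ℂ)) :
    IsDiffOpAt z fun g => applyWord w g z :=
  ⟨[(1, w)], fun g _ => by simp [applyOp]⟩

theorem isDiffOpAt_zero {z : Fin n → ℂ} : IsDiffOpAt z 0 :=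
  ⟨[], fun _ _ => rfl⟩

namespace IsDiffOpAt

variable {z : Fin n → ℂ} {T T' : ((Fin n → ℂ) → ℂ) → ℂ} {f g : (Fin n → ℂ) → ℂ}

theorem add (hT : IsDiffOpAt z T) (hT' : IsDiffOpAt z T') : IsDiffOpAt z (T + T') := by
  obtain ⟨u, hu⟩ := hT
  obtain ⟨u', hu'⟩ := hT'
  exact ⟨u ++ u', fun g hg => by rw [applyOp_append, ← hu g hg, ← hu' g hg]; rfl⟩

theorem const_smul (c : ℂ) (hT : IsDiffOpAt z T) : IsDiffOpAt z (c • T) := by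
  obtain ⟨u, hu⟩ := hT
  refine ⟨u.map fun p => (c * p.1, p.2), fun g hg => ?_⟩
  simp only [Pi.smul_apply, smul_eq_mul, hu g hg, applyOp, List.map_map,
    ← List.sum_map_mul_left]
  congr 1
  ext p
  simp [mul_assoc]

theorem congr (hT : IsDiffOpAt z T) (h : ∀ g, AnalyticAt ℂ g z → T g = T' g) :
    IsDiffOpAt z T' := by
  obtain ⟨u, hu⟩ := hT
  exact ⟨u, fun g hg => (h g hg).symm.trans (hu g hg)⟩

theorem map_add (hT : IsDiffOpAt z T) (hf : AnalyticAt ℂ f z) (hg : AnalyticAt ℂ g z) :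
    T (f + g) = T f + T g := by
  obtain ⟨u, hu⟩ := hT
  rw [hu _ (hf.add hg), hu f hf, hu g hg, applyOp_add u hf hg]

theorem map_smul (hT : IsDiffOpAt z T) (c : ℂ) (hg : AnalyticAt ℂ g z) : T (c • g) = c * T g := by
  obtain ⟨u, hu⟩ := hT
  rw [hu _ (hg.const_smul (c := c)), hu g hg, applyOp_const_smul]

theorem apply_eq_of_eventuallyEq (hT : IsDiffOpAt z T) (hf : AnalyticAt ℂ f z)
    (hg : AnalyticAt ℂ g z) (h : f =ᶠ[𝓝 z] g) : T f = T g := by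
  obtain ⟨u, hu⟩ := hT
  rw [hu f hf, hu g hg, applyOp_congr u h]

theorem induction {P : (((Fin n → ℂ) → ℂ) → ℂ) → Prop}
    (congr : ∀ T T', (∀ g, AnalyticAt ℂ g z → T g = T' g) → P T → P T') (zero : P 0)
    (word : ∀ w, P fun g => applyWord w g z)
    (add : ∀ T T', P T → P T' → P (T + T')) (smul : ∀ (c : ℂ) T, P T → P (c • T))
    (hT : IsDiffOpAt z T) : P T := by
  obtain ⟨u, hu⟩ := hT
  suffices ∀ u, P fun g => applyOp u g z from
    congr _ T (fun g hg => (hu g hg).symm) (this u)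
  intro u
  induction u with
  | nil => exact zero
  | cons p u ih =>
    refine congr _ _ (fun g _ => ?_) (add _ _ (smul p.1 _ (word p.2)) ih)
    simp [applyOp_cons]

end IsDiffOpAt

section AffineLeibniz

variable (ξ : Fin n → ℝ) (a : Fin n → ℂ) {z : Fin n → ℂ} {g : (Fin n → ℂ) → ℂ}

/-- The commutator `[∂_w, ⟨ξ, · - a⟩] = ∑ᵢ ⟨ξ, wᵢ⟩ ∂_{w without wᵢ}`, as an operator. -/
noncomputable def affineComm : List (Fin n → ℂ) → List (ℂ × List (Fin n → ℂ))
  | [] => []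
  | v :: w => (cpair ξ v, w) :: (affineComm w).map fun p => (p.1, v :: p.2)

theorem applyWord_affineForm_mul (w : List (Fin n → ℂ)) (hg : AnalyticAt ℂ g z) :
    applyWord w (affineForm ξ a * g) z =
      affineForm ξ a z * applyWord w g z + applyOp (affineComm ξ w) g z := by
  induction w generalizing z with
  | nil => exact (add_zero _).symm
  | cons v w ih =>
    have hw : applyWord w (affineForm ξ a * g) =ᶠ[𝓝 z]
        affineForm ξ a * applyWord w g + applyOp (affineComm ξ w) g := by
      filter_upwards [hg.eventually_analyticAt] with y hy using ih hy
    rw [applyWord_cons, (dirD_congr v hw).eq_of_nhds, dirD_add v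
      ((analyticAt_affineForm ξ a z).mul (analyticAt_applyWord w hg)).differentiableAt
      (analyticAt_applyOp _ hg).differentiableAt, dirD_mul v
      (analyticAt_affineForm ξ a z).differentiableAt (analyticAt_applyWord w hg).differentiableAt,
      dirD_affineForm, dirD_applyOp v _ hg, affineComm, applyOp_cons, applyWord_cons]
    ring

theorem affineComm_replicate (s : Fin n → ℂ) (k : ℕ) :
    affineComm ξ (List.replicate (k + 1) s) =
      List.replicate (k + 1) (cpair ξ s, List.replicate k s) := by
  induction k with
  | zero => rfl
  | succ k ih =>
    rw [List.replicate_succ, affineComm, ih, List.map_replicate, List.replicate_succ (n := k + 1)]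
    rfl

theorem fst_eq_zero_of_mem_affineComm {w : List (Fin n → ℂ)} (hw : ∀ v ∈ w, cpair ξ v = 0) :
    ∀ p ∈ affineComm ξ w, p.1 = 0 := by
  induction w with
  | nil => simp [affineComm]
  | cons v w ih =>
    simp only [affineComm, List.mem_cons, List.mem_map, forall_eq_or_imp]
    refine ⟨hw v (by simp), ?_⟩
    rintro _ ⟨q, hq, rfl⟩
    exact ih (fun v hv => hw v (by simp [hv])) q hq

theorem applyWord_affineForm_mul_of_cpair_eq_zero {w : List (Fin n → ℂ)}
    (hw : ∀ v ∈ w, cpair ξ v = 0) (hg : AnalyticAt ℂ g z) :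
    applyWord w (affineForm ξ a * g) z = affineForm ξ a z * applyWord w g z := by
  rw [applyWord_affineForm_mul ξ a w hg, applyOp_eq_zero (fst_eq_zero_of_mem_affineComm ξ hw),
    add_zero]

/-- The one-variable identity `∂ᵏ⁺¹(t g)(0) = (k + 1) ∂ᵏ g(0)`. -/
theorem applyWord_replicate_append_affineForm_mul {s : Fin n → ℂ} (hs : cpair ξ s = 1) (k : ℕ)
    {P : List (Fin n → ℂ)} (hP : ∀ v ∈ P, cpair ξ v = 0) (hg : AnalyticAt ℂ g a) :
    applyWord (List.replicate (k + 1) s ++ P) (affineForm ξ a * g) a =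
      (k + 1) * applyWord (List.replicate k s ++ P) g a := by
  have hP' : applyWord P (affineForm ξ a * g) =ᶠ[𝓝 a] affineForm ξ a * applyWord P g := by
    filter_upwards [hg.eventually_analyticAt] with y hy
      using applyWord_affineForm_mul_of_cpair_eq_zero ξ a hP hy
  rw [applyWord_append, (applyWord_congr _ hP').eq_of_nhds,
    applyWord_affineForm_mul ξ a _ (analyticAt_applyWord P hg), affineComm_replicate,
    applyOp_replicate, hs, affineForm_self, applyWord_append]
  push_cast
  ring

end AffineLeibniz

section Multipliers

def FactorsThroughMul (z : Fin n → ℂ) (p : (Fin n → ℂ) → ℂ) (T : ((Fin n → ℂ) → ℂ) → ℂ) :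
    Prop :=
  ∃ T', IsDiffOpAt z T' ∧ ∀ g, AnalyticAt ℂ g z → T' (p * g) = T g

namespace FactorsThroughMul

variable {z : Fin n → ℂ} {p : (Fin n → ℂ) → ℂ} {T T' : ((Fin n → ℂ) → ℂ) → ℂ}

theorem congr (hT : FactorsThroughMul z p T) (h : ∀ g, AnalyticAt ℂ g z → T g = T' g) :
    FactorsThroughMul z p T' := by
  obtain ⟨S, hS, hST⟩ := hT
  exact ⟨S, hS, fun g hg => (hST g hg).trans (h g hg)⟩

theorem zero : FactorsThroughMul z p 0 :=
  ⟨0, isDiffOpAt_zero, fun _ _ => rfl⟩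

theorem add (hT : FactorsThroughMul z p T) (hT' : FactorsThroughMul z p T') :
    FactorsThroughMul z p (T + T') := by
  obtain ⟨S, hS, hST⟩ := hT
  obtain ⟨S', hS', hST'⟩ := hT'
  exact ⟨S + S', hS.add hS', fun g hg => by simp [hST g hg, hST' g hg]⟩

theorem const_smul (c : ℂ) (hT : FactorsThroughMul z p T) : FactorsThroughMul z p (c • T) := by
  obtain ⟨S, hS, hST⟩ := hT
  exact ⟨c • S, hS.const_smul c, fun g hg => by simp [hST g hg]⟩

end FactorsThroughMul

variable (z : Fin n → ℂ)

def diffOpMultipliers : Submonoid ((Fin n → ℂ) → ℂ) where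
  carrier := {p | AnalyticAt ℂ p z ∧ ∀ T, IsDiffOpAt z T → IsDiffOpAt z fun g => T (p * g)}
  one_mem' := ⟨analyticAt_const, fun T hT => by simpa using hT⟩
  mul_mem' := fun ⟨hp, hpT⟩ ⟨hq, hqT⟩ =>
    ⟨hp.mul hq, fun T hT => by simpa [mul_assoc] using hqT _ (hpT T hT)⟩

def diffOpDivisors : Submonoid ((Fin n → ℂ) → ℂ) where
  carrier := {p | AnalyticAt ℂ p z ∧ ∀ T, IsDiffOpAt z T → FactorsThroughMul z p T}
  one_mem' := ⟨analyticAt_const, fun T hT => ⟨T, hT, fun g _ => by rw [one_mul]⟩⟩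
  mul_mem' := by
    rintro p q ⟨hp, hpT⟩ ⟨hq, hqT⟩
    refine ⟨hp.mul hq, fun T hT => ?_⟩
    obtain ⟨T₁, hT₁, hT₁T⟩ := hqT T hT
    obtain ⟨T₂, hT₂, hT₂T₁⟩ := hpT T₁ hT₁
    exact ⟨T₂, hT₂, fun g hg => by rw [mul_assoc, hT₂T₁ _ (hq.mul hg), hT₁T g hg]⟩

variable (ξ : Fin n → ℝ) (a : Fin n → ℂ)

theorem affineForm_mem_diffOpMultipliers : affineForm ξ a ∈ diffOpMultipliers z := by
  refine ⟨analyticAt_affineForm ξ a z, fun T => IsDiffOpAt.induction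
    (P := fun T => IsDiffOpAt z fun g => T (affineForm ξ a * g)) ?_ isDiffOpAt_zero ?_
    (fun _ _ => IsDiffOpAt.add) (fun c _ => IsDiffOpAt.const_smul c)⟩
  · exact fun T T' h hT => hT.congr fun g hg => h _ ((analyticAt_affineForm ξ a z).mul hg)
  · intro w
    exact (((isDiffOpAt_applyWord w).const_smul (affineForm ξ a z)).add
      (isDiffOpAt_applyOp _)).congr fun g hg => (applyWord_affineForm_mul ξ a w hg).symm

/-- Splitting each letter `v = ⟨ξ, v⟩ s + (v - ⟨ξ, v⟩ s)` and commuting the parts, `∂_w` becomes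
a combination of `∂ₛᵏ ∂_P` with `P ⊆ ker ξ`, which the one-variable identity inverts. -/
theorem factorsThroughMul_affineForm_applyWord {s : Fin n → ℂ} (hs : cpair ξ s = 1)
    (w : List (Fin n → ℂ)) (k : ℕ) {P : List (Fin n → ℂ)} (hP : ∀ v ∈ P, cpair ξ v = 0) :
    FactorsThroughMul a (affineForm ξ a) fun g => applyWord (w ++ List.replicate k s ++ P) g a := by
  induction w generalizing k P with
  | nil =>
    refine ⟨((k : ℂ) + 1)⁻¹ • fun g => applyWord (List.replicate (k + 1) s ++ P) g a,
      (isDiffOpAt_applyWord _).const_smul _, fun g hg => ?_⟩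
    rw [Pi.smul_apply, applyWord_replicate_append_affineForm_mul ξ a hs k hP hg, smul_eq_mul,
      inv_mul_cancel_left₀ (Nat.cast_add_one_ne_zero k), List.nil_append]
  | cons v w ih =>
    set o := v - cpair ξ v • s
    have ho : cpair ξ o = 0 := by simp [o, ← cpairL_apply, (cpairL_apply ξ s).trans hs]
    have hsplit (F : (Fin n → ℂ) → ℂ) : dirD v F a = cpair ξ v * dirD s F a + dirD o F a := by
      simp [o, dirD, map_sub]
    refine ((ih (k + 1) hP).const_smul (cpair ξ v)).add
      (ih k (List.forall_mem_cons.2 ⟨ho, hP⟩)) |>.congr fun g hg => ?_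
    have hs_perm :
        (s :: (w ++ List.replicate k s ++ P)).Perm (w ++ List.replicate (k + 1) s ++ P) := by
      simpa [List.replicate_succ] using List.perm_middle.symm
    have ho_perm : (o :: (w ++ List.replicate k s ++ P)).Perm (w ++ List.replicate k s ++ o :: P) :=
      List.perm_middle.symm
    rw [Pi.add_apply, Pi.smul_apply, smul_eq_mul, List.cons_append, List.cons_append,
      applyWord_cons, hsplit, ← (applyWord_perm hs_perm hg).eq_of_nhds,
      ← (applyWord_perm ho_perm hg).eq_of_nhds]
    rfl

theorem affineForm_mem_diffOpDivisors {ξ : Fin n → ℝ} (hξ : ξ ≠ 0) :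
    affineForm ξ a ∈ diffOpDivisors a := by
  obtain ⟨s, hs⟩ := exists_cpair_eq_one hξ
  refine ⟨analyticAt_affineForm ξ a a, fun T => IsDiffOpAt.induction
    (fun _ _ h hT => hT.congr h) FactorsThroughMul.zero (fun w => ?_)
    (fun _ _ => FactorsThroughMul.add) (fun c _ => FactorsThroughMul.const_smul c)⟩
  simpa using factorsThroughMul_affineForm_applyWord ξ a hs w 0 (P := []) (by simp)

end Multipliers

section Hyperplanes

variable (X : Finset (Fin n → ℝ)) (a : Fin n → ℂ)

theorem piPoly_eq_prod (e : (Fin n → ℝ) → ℕ) : piPoly X a e = ∏ ξ ∈ X, affineForm ξ a ^ e ξ := by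
  ext z
  simp [piPoly, affineForm, Finset.prod_apply]

theorem piPoly_mul_piPoly_sub {e e' : (Fin n → ℝ) → ℕ} (h : ∀ ξ ∈ X, e ξ ≤ e' ξ) :
    piPoly X a e * piPoly X a (e' - e) = piPoly X a e' := by
  simp only [piPoly_eq_prod, ← Finset.prod_mul_distrib, ← pow_add]
  exact Finset.prod_congr rfl fun ξ hξ => by rw [Pi.sub_apply, Nat.add_sub_cancel' (h ξ hξ)]

theorem piPoly_const (m : ℕ) : piPoly X a (fun _ => m) = (∏ ξ ∈ X, affineForm ξ a) ^ m := by
  rw [piPoly_eq_prod, Finset.prod_pow]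

theorem piPoly_mem_diffOpMultipliers (e : (Fin n → ℝ) → ℕ) :
    piPoly X a e ∈ diffOpMultipliers a := by
  rw [piPoly_eq_prod]
  exact Submonoid.prod_mem _ fun ξ _ => pow_mem (affineForm_mem_diffOpMultipliers a ξ a) _

theorem prod_affineForm_mem_diffOpDivisors (hX : ∀ ξ ∈ X, ξ ≠ 0) :
    ∏ ξ ∈ X, affineForm ξ a ∈ diffOpDivisors a :=
  Submonoid.prod_mem _ fun ξ hξ => affineForm_mem_diffOpDivisors a (hX ξ hξ)

def offHyperplanes : Set (Fin n → ℂ) := {z | ∀ ξ ∈ X, cpair ξ (z - a) ≠ 0}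

theorem offHyperplanes_mem_germFilter : offHyperplanes X a ∈ germFilter X a :=
  mem_inf_of_right (mem_principal_self _)

theorem piPoly_ne_zero (e : (Fin n → ℝ) → ℕ) {z : Fin n → ℂ} (hz : z ∈ offHyperplanes X a) :
    piPoly X a e z ≠ 0 :=
  Finset.prod_ne_zero_iff.2 fun ξ hξ => pow_ne_zero _ (hz ξ hξ)

/-- A hyperplane has empty interior: `⟨ξ, · - a⟩` vanishing near a point would have derivative
zero there. -/
theorem dense_setOf_affineForm_ne_zero {ξ : Fin n → ℝ} (hξ : ξ ≠ 0) :
    Dense {z | affineForm ξ a z ≠ 0} := by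
  obtain ⟨s, hs⟩ := exists_cpair_eq_one hξ
  rw [← Set.compl_ofPred, ← interior_eq_empty_iff_dense_compl, Set.eq_empty_iff_forall_notMem]
  intro y hy
  have hzero : affineForm ξ a =ᶠ[𝓝 y] fun _ => 0 := mem_interior_iff_mem_nhds.1 hy
  have := (dirD_congr s hzero).eq_of_nhds
  rw [dirD_affineForm, hs] at this
  simp [dirD] at this

theorem dense_offHyperplanes (hX : ∀ ξ ∈ X, ξ ≠ 0) : Dense (offHyperplanes X a) := by
  have h : offHyperplanes X a = ⋂ ξ ∈ (X : Set (Fin n → ℝ)), {z | affineForm ξ a z ≠ 0} := by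
    ext z; simp [offHyperplanes, affineForm]
  rw [h]
  exact dense_biInter_of_isOpen
    (fun ξ _ => isOpen_ne_fun (continuous_iff_continuousAt.2 fun z =>
      (analyticAt_affineForm ξ a z).continuousAt) continuous_const)
    X.countable_toSet fun ξ hξ => dense_setOf_affineForm_ne_zero a (hX ξ hξ)

end Hyperplanes

theorem eventuallyEq_nhds_of_inf_principal {α β : Type*} [TopologicalSpace α] [TopologicalSpace β]
    [T2Space β] {S : Set α} (hS : Dense S) {f g : α → β} {a : α}
    (hf : ∀ᶠ x in 𝓝 a, ContinuousAt f x) (hg : ∀ᶠ x in 𝓝 a, ContinuousAt g x)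
    (h : f =ᶠ[𝓝 a ⊓ 𝓟 S] g) : f =ᶠ[𝓝 a] g := by
  rw [EventuallyEq, eventually_inf_principal] at h
  obtain ⟨U, hU, hUo, haU⟩ := mem_nhds_iff.1 (hf.and (hg.and h))
  exact eventually_of_mem (hUo.mem_nhds haU) <| Set.EqOn.of_subset_closure
    (fun x hx => (hU hx.1).2.2 hx.2) (fun x hx => (hU hx).1.continuousWithinAt)
    (fun x hx => (hU hx).2.1.continuousWithinAt) Set.inter_subset_left
    (hS.open_subset_closure_inter hUo)

section Germs

variable (X : Finset (Fin n → ℝ)) (a : Fin n → ℂ)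

theorem eventuallyEq_nhds_of_germFilter (hX : ∀ ξ ∈ X, ξ ≠ 0) {f g : (Fin n → ℂ) → ℂ}
    (hf : AnalyticAt ℂ f a) (hg : AnalyticAt ℂ g a) (h : f =ᶠ[germFilter X a] g) :
    f =ᶠ[𝓝 a] g :=
  eventuallyEq_nhds_of_inf_principal (dense_offHyperplanes X a hX)
    (hf.eventually_analyticAt.mono fun _ h => h.continuousAt)
    (hg.eventually_analyticAt.mono fun _ h => h.continuousAt) h

theorem mero_zero (g : (Fin n → ℂ) → ℂ) : mero X a 0 g = g := by
  ext z
  simp [mero, piPoly]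

theorem mero_add (e : (Fin n → ℝ) → ℕ) (f g : (Fin n → ℂ) → ℂ) :
    mero X a e (f + g) = mero X a e f + mero X a e g := by
  ext z
  simp [mero, mul_add]

theorem mero_smul (e : (Fin n → ℝ) → ℕ) (c : ℂ) (g : (Fin n → ℂ) → ℂ) :
    mero X a e (c • g) = c • mero X a e g := by
  ext z
  simp only [mero, Pi.smul_apply, smul_eq_mul]
  ring

theorem mero_eq_mero_of_le {e e' : (Fin n → ℝ) → ℕ} (h : ∀ ξ ∈ X, e ξ ≤ e' ξ)
    (g : (Fin n → ℂ) → ℂ) :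
    (mero X a e g : Germ (germFilter X a) ℂ) = mero X a e' (piPoly X a (e' - e) * g) := by
  refine Germ.coe_eq.2 (eventually_of_mem (offHyperplanes_mem_germFilter X a) fun z hz => ?_)
  have h₁ := piPoly_ne_zero X a e hz
  have h₂ := piPoly_ne_zero X a (e' - e) hz
  simp only [mero, Pi.mul_apply, ← piPoly_mul_piPoly_sub X a h]
  field_simp

theorem eventuallyEq_of_mero_eq {e : (Fin n → ℝ) → ℕ} {g g' : (Fin n → ℂ) → ℂ}
    (h : (mero X a e g : Germ (germFilter X a) ℂ) = mero X a e g') :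
    g =ᶠ[germFilter X a] g' := by
  filter_upwards [Germ.coe_eq.1 h, offHyperplanes_mem_germFilter X a] with z hz hS
  exact mul_left_cancel₀ (inv_ne_zero (piPoly_ne_zero X a e hS)) hz

end Germs

section Chain

variable {z : Fin n → ℂ} {p : (Fin n → ℂ) → ℂ} {T : ℕ → ((Fin n → ℂ) → ℂ) → ℂ}

def IsDiffOpChain (z : Fin n → ℂ) (p : (Fin n → ℂ) → ℂ) (T : ℕ → ((Fin n → ℂ) → ℂ) → ℂ) :
    Prop :=
  ∀ k, IsDiffOpAt z (T k) ∧ ∀ g, AnalyticAt ℂ g z → T (k + 1) (p * g) = T k g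

theorem exists_isDiffOpChain (hp : p ∈ diffOpDivisors z) {T₀ : ((Fin n → ℂ) → ℂ) → ℂ}
    (hT₀ : IsDiffOpAt z T₀) : ∃ T, T 0 = T₀ ∧ IsDiffOpChain z p T := by
  have step (T : {T // IsDiffOpAt z T}) :
      ∃ T' : {T // IsDiffOpAt z T}, ∀ g, AnalyticAt ℂ g z → T'.1 (p * g) = T.1 g := by
    obtain ⟨T', hT', h⟩ := hp.2 T.1 T.2
    exact ⟨⟨T', hT'⟩, h⟩
  choose F hF using step
  refine ⟨fun k => (F^[k] ⟨T₀, hT₀⟩).1, rfl, fun k => ⟨(F^[k] _).2, fun g hg => ?_⟩⟩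
  change (F^[k + 1] _).1 (p * g) = (F^[k] _).1 g
  rw [Function.iterate_succ_apply']
  exact hF _ g hg

theorem IsDiffOpChain.apply_add_pow_mul (hT : IsDiffOpChain z p T) (hp : AnalyticAt ℂ p z)
    (k m : ℕ) {g : (Fin n → ℂ) → ℂ} (hg : AnalyticAt ℂ g z) : T (k + m) (p ^ m * g) = T k g := by
  induction m with
  | zero => simp
  | succ m ih => rw [← add_assoc, pow_succ', mul_assoc, (hT (k + m)).2 _ ((hp.pow m).mul hg), ih]

variable {X : Finset (Fin n → ℝ)} {a : Fin n → ℂ} {d : (Fin n → ℝ) → ℕ}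

theorem IsDiffOpChain.apply_eq_of_mero_eq (hX : ∀ ξ ∈ X, ξ ≠ 0)
    (hT : IsDiffOpChain a (∏ ξ ∈ X, affineForm ξ a) T) {k₁ k₂ : ℕ} {G₁ G₂ : (Fin n → ℂ) → ℂ}
    (hG₁ : AnalyticAt ℂ G₁ a) (hG₂ : AnalyticAt ℂ G₂ a)
    (h : (mero X a (fun ξ => d ξ + k₁) G₁ : Germ (germFilter X a) ℂ) =
      mero X a (fun ξ => d ξ + k₂) G₂) :
    T k₁ G₁ = T k₂ G₂ := by
  wlog hk : k₁ ≤ k₂ generalizing k₁ k₂ G₁ G₂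
  · exact (this hG₂ hG₁ h.symm (le_of_not_ge hk)).symm
  obtain ⟨m, rfl⟩ := Nat.exists_eq_add_of_le hk
  have hΛ := (prod_affineForm_mem_diffOpDivisors X a hX).1
  have hexp : (fun ξ => d ξ + (k₁ + m)) - (fun ξ => d ξ + k₁) = fun _ => m := by
    ext ξ
    simp only [Pi.sub_apply]
    omega
  rw [mero_eq_mero_of_le X a (e' := fun ξ => d ξ + (k₁ + m)) (fun ξ _ => by omega), hexp,
    piPoly_const] at h
  rw [← hT.apply_add_pow_mul hΛ k₁ m hG₁]
  exact (hT (k₁ + m)).1.apply_eq_of_eventuallyEq ((hΛ.pow m).mul hG₁) hG₂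
    (eventuallyEq_nhds_of_germFilter X a hX ((hΛ.pow m).mul hG₁) hG₂
      (eventuallyEq_of_mero_eq X a h))

open Classical in
/-- Reads a germ `π_{a, d + k}⁻¹ G` as `T k G` (and is junk `0` off `M(a, X)`). -/
noncomputable def chainFunctional (X : Finset (Fin n → ℝ)) (a : Fin n → ℂ) (d : (Fin n → ℝ) → ℕ)
    (T : ℕ → ((Fin n → ℂ) → ℂ) → ℂ) (φ : Germ (germFilter X a) ℂ) : ℂ :=
  if h : ∃ kG : ℕ × ((Fin n → ℂ) → ℂ), AnalyticAt ℂ kG.2 a ∧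
      φ = mero X a (fun ξ => d ξ + kG.1) kG.2 then
    T h.choose.1 h.choose.2
  else 0

theorem chainFunctional_mero (hX : ∀ ξ ∈ X, ξ ≠ 0)
    (hT : IsDiffOpChain a (∏ ξ ∈ X, affineForm ξ a) T) (k : ℕ) {G : (Fin n → ℂ) → ℂ}
    (hG : AnalyticAt ℂ G a) : chainFunctional X a d T (mero X a (fun ξ => d ξ + k) G) = T k G := by
  have h : ∃ kG : ℕ × ((Fin n → ℂ) → ℂ), AnalyticAt ℂ kG.2 a ∧
      (mero X a (fun ξ => d ξ + k) G : Germ (germFilter X a) ℂ) =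
        mero X a (fun ξ => d ξ + kG.1) kG.2 := ⟨(k, G), hG, rfl⟩
  rw [chainFunctional, dif_pos h]
  exact hT.apply_eq_of_mero_eq hX h.choose_spec.1 hG h.choose_spec.2.symm

theorem eventually_exists_mero_eq {φ : Germ (germFilter X a) ℂ} (hφ : φ ∈ Ma X a)
    (d : (Fin n → ℝ) → ℕ) :
    ∀ᶠ k in atTop, ∃ G, AnalyticAt ℂ G a ∧ φ = mero X a (fun ξ => d ξ + k) G := by
  obtain ⟨d', g, hg, rfl⟩ := hφ
  filter_upwards [eventually_ge_atTop (X.sup d')] with k hk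
  exact ⟨_, (piPoly_mem_diffOpMultipliers X a _).1.mul hg, mero_eq_mero_of_le X a
    (fun ξ hξ => ((Finset.le_sup hξ).trans hk).trans (Nat.le_add_left _ _)) g⟩

theorem isLaurentAt_chainFunctional (hX : ∀ ξ ∈ X, ξ ≠ 0)
    (hT : IsDiffOpChain a (∏ ξ ∈ X, affineForm ξ a) T) :
    IsLaurentAt X a (chainFunctional X a d T) := by
  refine ⟨fun φ ψ hφ hψ => ?_, fun c φ hφ => ?_, fun d' => ?_⟩
  · obtain ⟨k, ⟨G₁, hG₁, rfl⟩, ⟨G₂, hG₂, rfl⟩⟩ :=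
      ((eventually_exists_mero_eq hφ d).and (eventually_exists_mero_eq hψ d)).exists
    rw [← Germ.coe_add, ← mero_add, chainFunctional_mero hX hT k (hG₁.add hG₂),
      chainFunctional_mero hX hT k hG₁, chainFunctional_mero hX hT k hG₂,
      (hT k).1.map_add hG₁ hG₂]
  · obtain ⟨k, G, hG, rfl⟩ := (eventually_exists_mero_eq hφ d).exists
    rw [← Germ.coe_smul, ← mero_smul, chainFunctional_mero hX hT k (hG.const_smul (c := c)),
      chainFunctional_mero hX hT k hG, (hT k).1.map_smul c hG]
  · set k := X.sup d'
    have hle : ∀ ξ ∈ X, d' ξ ≤ d ξ + k := fun ξ hξ => (Finset.le_sup hξ).trans (Nat.le_add_left _ _)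
    have hP := piPoly_mem_diffOpMultipliers X a ((fun ξ => d ξ + k) - d')
    obtain ⟨u, hu⟩ := hP.2 (T k) (hT k).1
    refine ⟨u, fun g hg => ?_⟩
    rw [mero_eq_mero_of_le X a hle g, chainFunctional_mero hX hT k (hP.1.mul hg)]
    exact hu g hg

end Chain

theorem exists_isLaurentAt_mero_eq {X : Finset (Fin n → ℝ)} (hX : ∀ ξ ∈ X, ξ ≠ 0)
    (a : Fin n → ℂ) (d : (Fin n → ℝ) → ℕ) (u : List (ℂ × List (Fin n → ℂ))) :
    ∃ L : Germ (germFilter X a) ℂ → ℂ, IsLaurentAt X a L ∧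
      ∀ g, AnalyticAt ℂ g a → L (mero X a d g) = applyOp u g a := by
  obtain ⟨T, hT₀, hT⟩ :=
    exists_isDiffOpChain (prod_affineForm_mem_diffOpDivisors X a hX) (isDiffOpAt_applyOp u)
  refine ⟨chainFunctional X a d T, isLaurentAt_chainFunctional hX hT, fun g hg => ?_⟩
  simpa [hT₀] using chainFunctional_mero (d := d) hX hT 0 hg

/-- Existence of Laurent functionals with a prescribed `d`-component:  for every
`d : X → ℕ` and every `u ∈ S(V)` there is an `X`-Laurent functional `L` at `a` with
`L φ = u(π_{a,d} φ)(a)` for all `φ ∈ π_{a,d}⁻¹ O_a`.  In particular, there is an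
`X`-Laurent functional at `a` with `L φ = φ(a)` for all germs `φ` holomorphic at `a`. -/
theorem exists_laurent_functional_with_component
    (X : Finset (Fin n → ℝ)) (hX : ∀ ξ ∈ X, ξ ≠ 0) (a : Fin n → ℂ)
    (d : (Fin n → ℝ) → ℕ) (u : List (ℂ × List (Fin n → ℂ))) :
    (∃ L : Filter.Germ (germFilter X a) ℂ → ℂ, IsLaurentAt X a L ∧
      ∀ g : (Fin n → ℂ) → ℂ, AnalyticAt ℂ g a →
        L (mero X a d g : Filter.Germ (germFilter X a) ℂ) = applyOp u g a) ∧
    (∃ L : Filter.Germ (germFilter X a) ℂ → ℂ, IsLaurentAt X a L ∧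
      ∀ g : (Fin n → ℂ) → ℂ, AnalyticAt ℂ g a →
        L (g : Filter.Germ (germFilter X a) ℂ) = g a) := by
  refine ⟨exists_isLaurentAt_mero_eq hX a d u, ?_⟩
  obtain ⟨L, hL, hLg⟩ := exists_isLaurentAt_mero_eq hX a 0 [(1, [])]
  refine ⟨L, hL, fun g hg => ?_⟩
  simpa [mero_zero, applyOp, applyWord] using hLg g hg

end LaurentFunctionals
end

section
/- Let V_0, V be finite-dimensional real inner product spaces and ι : V_0 → V an injective linear isometry with adjoint p : V → V_0. Let X ⊂ V \ {0} be finite with no element orthogonal to ι(V_0), and set X_0 = p(X) ⊂ V_0 \ {0}. Let a_0 ∈ (V_0)_C and a = ι(a_0). Then the pullback map ι^* : M(V_C, a, X, E) → M((V_0)_C, a_0, X_0, E), φ ↦ φ∘ι, is well-defined and surjective for every complete locally convex space E. -/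
namespace PullbackLaurent

/-- The complex bilinear pairing `⟨ξ, z⟩` of `ξ ∈ ℝᵐ` with `z ∈ ℂᵐ`. -/
noncomputable def cpair {m : ℕ} (ξ : Fin m → ℝ) (z : Fin m → ℂ) : ℂ :=
  ∑ i, (ξ i : ℂ) * z i

/-- The germ filter at `b`: neighborhoods of `b` minus the `Y`-hyperplanes through `b`. -/
noncomputable def germFilter {m : ℕ} (Y : Finset (Fin m → ℝ)) (b : Fin m → ℂ) :
    Filter (Fin m → ℂ) :=
  nhds b ⊓ Filter.principal {z | ∀ ξ ∈ Y, cpair ξ (z - b) ≠ 0}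

/-- The polynomial `π_{b,d}(z) = ∏_{ξ ∈ Y} ⟨ξ, z − b⟩^{d ξ}`. -/
noncomputable def piPoly {m : ℕ} (Y : Finset (Fin m → ℝ)) (b : Fin m → ℂ)
    (d : (Fin m → ℝ) → ℕ) : (Fin m → ℂ) → ℂ :=
  fun z => ∏ ξ ∈ Y, cpair ξ (z - b) ^ d ξ

/-- `g` is (weakly) holomorphic in a neighborhood of `b`, with values in a complete
locally convex space `E`: every continuous linear functional composed with `g` is
analytic on a fixed neighborhood of `b`. -/
def WAnalyticAt {m : ℕ} {E : Type*} [AddCommGroup E] [Module ℂ E] [TopologicalSpace E]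
    (g : (Fin m → ℂ) → E) (b : Fin m → ℂ) : Prop :=
  ∃ U ∈ nhds b, ∀ l : E →L[ℂ] ℂ, ∀ z ∈ U, AnalyticAt ℂ (fun w => l (g w)) z

/-- `M(b, Y, E)`: germs at `b` of `E`-valued meromorphic functions with singular locus
at `b` contained in the union of the `Y`-hyperplanes through `b`. -/
def MaE {m : ℕ} {E : Type*} [AddCommGroup E] [Module ℂ E] [TopologicalSpace E]
    (Y : Finset (Fin m → ℝ)) (b : Fin m → ℂ) :
    Set (Filter.Germ (germFilter Y b) E) :=
  {φ | ∃ (d : (Fin m → ℝ) → ℕ) (g : (Fin m → ℂ) → E), WAnalyticAt g b ∧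
    φ = ((fun z => (piPoly Y b d z)⁻¹ • g z) : Filter.Germ (germFilter Y b) E)}

/-- The complexification `ℂᵏ → ℂⁿ` of a real linear map `ℝᵏ → ℝⁿ`. -/
noncomputable def cplxMap {k n : ℕ} (f : (Fin k → ℝ) →ₗ[ℝ] (Fin n → ℝ)) :
    (Fin k → ℂ) →ₗ[ℂ] (Fin n → ℂ) :=
  Matrix.toLin' ((LinearMap.toMatrix' f).map (fun x : ℝ => (x : ℂ)))

/-! Complexify `ι` and `p`. Since `p` is the transpose of `ι`, `⟨ξ, ι z⟩ = ⟨p ξ, z⟩`, hence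
`π_{a,X,d} ∘ ι = π_{a₀,X₀,p_*(d)}` and `ι` maps the punctured neighbourhoods defining germs at
`a₀` into those at `a`; this gives well-definedness. Since `p ∘ ι = id`, the germ
`π_{a₀,X₀,d₀}⁻¹ g₀` is the pullback of `π_{a,X,d}⁻¹ (g₀ ∘ p)` for any `d` with `p_*(d) = d₀`. -/

open Filter Matrix

section Degrees

variable {α β : Type*} [DecidableEq β]

/-- The push-forward `q_* d` of a multiplicity function `d` on `X` along `q`. -/
def pushDegree (X : Finset α) (q : α → β) (d : α → ℕ) (η : β) : ℕ :=
  ∑ ξ ∈ X with q ξ = η, d ξ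

theorem prod_comp_pow_eq_prod_pow_pushDegree {M : Type*} [CommMonoid M] {X : Finset α}
    {X₀ : Finset β} {q : α → β} (hq : Set.MapsTo q X X₀) (f : β → M) (d : α → ℕ) :
    ∏ ξ ∈ X, f (q ξ) ^ d ξ = ∏ η ∈ X₀, f η ^ pushDegree X q d η := by
  rw [← Finset.prod_fiberwise_of_maps_to hq]
  refine Finset.prod_congr rfl fun η _ => ?_
  rw [pushDegree, ← Finset.prod_pow_eq_pow_sum]
  exact Finset.prod_congr rfl fun ξ hξ => by rw [(Finset.mem_filter.1 hξ).2]

theorem exists_pushDegree_eq {X : Finset α} {X₀ : Finset β} {q : α → β}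
    (hq : Set.SurjOn q X X₀) (d₀ : β → ℕ) : ∃ d, ∀ η ∈ X₀, pushDegree X q d η = d₀ η := by
  rcases isEmpty_or_nonempty α with _ | _
  · exact ⟨0, fun η hη => isEmptyElim (hq hη).choose⟩
  classical
  -- Put the whole multiplicity `d₀ η` on one chosen preimage of each `η`.
  set s := Function.invFunOn q X
  refine ⟨fun ξ => if s (q ξ) = ξ then d₀ (q ξ) else 0, fun η hη => ?_⟩
  have hsη : s η ∈ X.filter (q · = η) :=
    Finset.mem_filter.2 ⟨hq.mapsTo_invFunOn hη, hq.rightInvOn_invFunOn hη⟩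
  calc pushDegree X q _ η = ∑ ξ ∈ X with q ξ = η, if s η = ξ then d₀ η else 0 :=
        Finset.sum_congr rfl fun ξ hξ => by rw [(Finset.mem_filter.1 hξ).2]
    _ = d₀ η := by rw [Finset.sum_ite_eq, if_pos hsη]

end Degrees

section Complexification

theorem comp_eq_id_of_isometry_of_adjoint {R : Type*} [Semiring R] {m n : Type*} [Fintype m]
    [Fintype n] {ι : (m → R) →ₗ[R] (n → R)} {p : (n → R) →ₗ[R] (m → R)}
    (hiso : ∀ v w, ι v ⬝ᵥ ι w = v ⬝ᵥ w) (hadj : ∀ z w, p z ⬝ᵥ w = z ⬝ᵥ ι w) :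
    p ∘ₗ ι = LinearMap.id :=
  LinearMap.ext fun v => dotProduct_eq _ _ fun w => (hadj (ι v) w).trans (hiso v w)

variable {k l n : ℕ}

theorem cplxMap_comp (g : (Fin n → ℝ) →ₗ[ℝ] (Fin l → ℝ)) (f : (Fin k → ℝ) →ₗ[ℝ] (Fin n → ℝ)) :
    cplxMap (g ∘ₗ f) = cplxMap g ∘ₗ cplxMap f := by
  simp only [cplxMap, LinearMap.toMatrix'_comp, ← Matrix.toLin'_mul]
  exact congrArg toLin' (Matrix.map_mul (f := Complex.ofRealHom))

theorem cplxMap_id : cplxMap (LinearMap.id : (Fin k → ℝ) →ₗ[ℝ] (Fin k → ℝ)) = LinearMap.id := by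
  simp [cplxMap]

theorem cpair_cplxMap {f : (Fin k → ℝ) →ₗ[ℝ] (Fin n → ℝ)} {ξ : Fin n → ℝ} {η : Fin k → ℝ}
    (h : ∀ w, ξ ⬝ᵥ f w = η ⬝ᵥ w) (z : Fin k → ℂ) : cpair ξ (cplxMap f z) = cpair η z := by
  have hvec : ξ ᵥ* LinearMap.toMatrix' f = η :=
    dotProduct_eq _ _ fun w => by rw [← dotProduct_mulVec, LinearMap.toMatrix'_mulVec, h]
  change (Complex.ofRealHom ∘ ξ) ⬝ᵥ ((LinearMap.toMatrix' f).map Complex.ofRealHom *ᵥ z) =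
    (Complex.ofRealHom ∘ η) ⬝ᵥ z
  rw [dotProduct_mulVec, ← hvec]
  congr 1
  funext j
  exact (RingHom.map_vecMul _ _ _ _).symm

end Complexification

section Pullback

variable {k n : ℕ} {E : Type*} [AddCommGroup E] [Module ℂ E] [TopologicalSpace E]

theorem WAnalyticAt.comp_linearMap {m m' : ℕ} {g : (Fin m → ℂ) → E}
    (T : (Fin m' → ℂ) →ₗ[ℂ] (Fin m → ℂ)) {b : Fin m' → ℂ} (hg : WAnalyticAt g (T b)) :
    WAnalyticAt (fun z => g (T z)) b := by
  obtain ⟨U, hU, hgU⟩ := hg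
  exact ⟨T ⁻¹' U, T.continuous_of_finiteDimensional.continuousAt.preimage_mem_nhds hU,
    fun l z hz => (hgU l (T z) hz).comp (T.toContinuousLinearMap.analyticAt z)⟩

variable {T : (Fin k → ℂ) →ₗ[ℂ] (Fin n → ℂ)} {q : (Fin n → ℝ) → (Fin k → ℝ)}
  {X : Finset (Fin n → ℝ)} {X₀ : Finset (Fin k → ℝ)}

theorem tendsto_germFilter (hq : Set.MapsTo q X X₀)
    (hT : ∀ ξ z, cpair ξ (T z) = cpair (q ξ) z) (b : Fin k → ℂ) :
    Tendsto T (germFilter X₀ b) (germFilter X (T b)) := by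
  unfold germFilter
  refine tendsto_inf.2 ⟨(T.continuous_of_finiteDimensional.tendsto b).mono_left inf_le_left, ?_⟩
  rw [tendsto_principal, eventually_inf_principal]
  refine Eventually.of_forall fun w hw ξ hξ => ?_
  rw [← map_sub, hT]
  exact hw (q ξ) (hq hξ)

theorem piPoly_comp (hq : Set.MapsTo q X X₀) (hT : ∀ ξ z, cpair ξ (T z) = cpair (q ξ) z)
    (b : Fin k → ℂ) (d : (Fin n → ℝ) → ℕ) (w : Fin k → ℂ) :
    piPoly X (T b) d (T w) = piPoly X₀ b (pushDegree X q d) w := by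
  simp only [piPoly, ← map_sub, hT]
  exact prod_comp_pow_eq_prod_pow_pushDegree hq (fun η => cpair η (w - b)) d

theorem comp_mem_MaE (hq : Set.MapsTo q X X₀) (hT : ∀ ξ z, cpair ξ (T z) = cpair (q ξ) z)
    {b : Fin k → ℂ} {f : (Fin n → ℂ) → E}
    (hf : (f : Germ (germFilter X (T b)) E) ∈ MaE X (T b)) :
    ((fun w => f (T w)) : Germ (germFilter X₀ b) E) ∈ MaE X₀ b := by
  obtain ⟨d, g, hg, hfg⟩ := hf
  refine ⟨pushDegree X q d, fun w => g (T w), hg.comp_linearMap T, Germ.coe_eq.2 ?_⟩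
  refine ((Germ.coe_eq.1 hfg).comp_tendsto (tendsto_germFilter hq hT b)).trans
    (EventuallyEq.of_eq (funext fun w => ?_))
  simp only [Function.comp, piPoly_comp hq hT]

theorem exists_mem_MaE_comp_eq (hq : Set.MapsTo q X X₀) (hq' : Set.SurjOn q X X₀)
    (hT : ∀ ξ z, cpair ξ (T z) = cpair (q ξ) z) {S : (Fin n → ℂ) →ₗ[ℂ] (Fin k → ℂ)}
    (hST : ∀ z, S (T z) = z) {b : Fin k → ℂ} {φ₀ : Germ (germFilter X₀ b) E}
    (hφ₀ : φ₀ ∈ MaE X₀ b) :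
    ∃ f : (Fin n → ℂ) → E, (f : Germ (germFilter X (T b)) E) ∈ MaE X (T b) ∧
      φ₀ = ((fun w => f (T w)) : Germ (germFilter X₀ b) E) := by
  obtain ⟨d₀, g₀, hg₀, rfl⟩ := hφ₀
  obtain ⟨d, hd⟩ := exists_pushDegree_eq hq' d₀
  refine ⟨fun v => (piPoly X (T b) d v)⁻¹ • g₀ (S v),
    ⟨d, _, (hST b ▸ hg₀).comp_linearMap S, rfl⟩, congrArg _ (funext fun w => ?_)⟩
  have hpoly : piPoly X₀ b (pushDegree X q d) w = piPoly X₀ b d₀ w :=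
    Finset.prod_congr rfl fun η hη => by rw [hd η hη]
  simp only [piPoly_comp hq hT, hST, hpoly]

end Pullback

theorem pullback_well_defined_and_surjective_general {k n : ℕ}
    {E : Type*} [AddCommGroup E] [Module ℂ E] [UniformSpace E]
    (ι : (Fin k → ℝ) →ₗ[ℝ] (Fin n → ℝ))
    (hiso : ∀ v w : Fin k → ℝ, ∑ i, ι v i * ι w i = ∑ i, v i * w i)
    (p : (Fin n → ℝ) →ₗ[ℝ] (Fin k → ℝ))
    (hadj : ∀ (z : Fin n → ℝ) (w : Fin k → ℝ), ∑ i, p z i * w i = ∑ i, z i * ι w i)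
    (X : Finset (Fin n → ℝ))
    (X₀ : Finset (Fin k → ℝ)) (hX₀ : ∀ η, η ∈ X₀ ↔ ∃ ξ ∈ X, η = p ξ)
    (a₀ : Fin k → ℂ) :
    (∀ f f' : (Fin n → ℂ) → E,
      f =ᶠ[germFilter X (cplxMap ι a₀)] f' →
      (fun w => f (cplxMap ι w)) =ᶠ[germFilter X₀ a₀] fun w => f' (cplxMap ι w)) ∧
    (∀ f : (Fin n → ℂ) → E,
      (f : Filter.Germ (germFilter X (cplxMap ι a₀)) E) ∈ MaE X (cplxMap ι a₀) →
      ((fun w => f (cplxMap ι w)) : Filter.Germ (germFilter X₀ a₀) E) ∈ MaE X₀ a₀) ∧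
    (∀ φ₀ : Filter.Germ (germFilter X₀ a₀) E, φ₀ ∈ MaE X₀ a₀ →
      ∃ f : (Fin n → ℂ) → E,
        (f : Filter.Germ (germFilter X (cplxMap ι a₀)) E) ∈ MaE X (cplxMap ι a₀) ∧
        φ₀ = ((fun w => f (cplxMap ι w)) : Filter.Germ (germFilter X₀ a₀) E)) := by
  have hT : ∀ ξ z, cpair ξ (cplxMap ι z) = cpair (p ξ) z :=
    fun ξ => cpair_cplxMap fun w => (hadj ξ w).symm
  have hmaps : Set.MapsTo p X X₀ := fun ξ hξ => (hX₀ _).2 ⟨ξ, hξ, rfl⟩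
  have hsurj : Set.SurjOn p X X₀ := fun η hη => by
    obtain ⟨ξ, hξ, rfl⟩ := (hX₀ η).1 hη
    exact ⟨ξ, hξ, rfl⟩
  have hpι : ∀ z, cplxMap p (cplxMap ι z) = z := fun z => by
    rw [← LinearMap.comp_apply, ← cplxMap_comp, comp_eq_id_of_isometry_of_adjoint hiso hadj,
      cplxMap_id, LinearMap.id_apply]
  exact ⟨fun f f' h => h.comp_tendsto (tendsto_germFilter hmaps hT a₀),
    fun f => comp_mem_MaE hmaps hT,
    fun φ₀ => exists_mem_MaE_comp_eq hmaps hsurj hT hpι⟩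

/-- Let `ι : V₀ → V` be an injective linear map between real inner product spaces, with
the inner product of `V₀` the pullback of that of `V`, and let `p` be the adjoint of `ι`.
Let `X ⊆ V \ {0}` be finite with no element orthogonal to `ι(V₀)` and `X₀ = p(X)`.
Then for `a₀ ∈ (V₀)_ℂ` and `a = ι(a₀)`, the pullback `ι^* : φ ↦ φ ∘ ι` is a well-defined
and surjective map `M(V_ℂ, a, X, E) → M((V₀)_ℂ, a₀, X₀, E)`, for every complete locally
convex space `E`. -/
theorem pullback_well_defined_and_surjective {k n : ℕ}
    {E : Type*} [AddCommGroup E] [Module ℂ E] [UniformSpace E] [IsUniformAddGroup E]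
    [ContinuousSMul ℂ E] [CompleteSpace E] [T2Space E]
    [Module ℝ E] [IsScalarTower ℝ ℂ E] [LocallyConvexSpace ℝ E]
    (ι : (Fin k → ℝ) →ₗ[ℝ] (Fin n → ℝ)) (hinj : Function.Injective ι)
    (hiso : ∀ v w : Fin k → ℝ, ∑ i, ι v i * ι w i = ∑ i, v i * w i)
    (p : (Fin n → ℝ) →ₗ[ℝ] (Fin k → ℝ))
    (hadj : ∀ (z : Fin n → ℝ) (w : Fin k → ℝ), ∑ i, p z i * w i = ∑ i, z i * ι w i)
    (X : Finset (Fin n → ℝ)) (hX : ∀ ξ ∈ X, ξ ≠ 0)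
    (horth : ∀ ξ ∈ X, ∃ v : Fin k → ℝ, ∑ i, ξ i * ι v i ≠ 0)
    (X₀ : Finset (Fin k → ℝ)) (hX₀ : ∀ η, η ∈ X₀ ↔ ∃ ξ ∈ X, η = p ξ)
    (a₀ : Fin k → ℂ) :
    (∀ f f' : (Fin n → ℂ) → E,
      f =ᶠ[germFilter X (cplxMap ι a₀)] f' →
      (fun w => f (cplxMap ι w)) =ᶠ[germFilter X₀ a₀] fun w => f' (cplxMap ι w)) ∧
    (∀ f : (Fin n → ℂ) → E,
      (f : Filter.Germ (germFilter X (cplxMap ι a₀)) E) ∈ MaE X (cplxMap ι a₀) →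
      ((fun w => f (cplxMap ι w)) : Filter.Germ (germFilter X₀ a₀) E) ∈ MaE X₀ a₀) ∧
    (∀ φ₀ : Filter.Germ (germFilter X₀ a₀) E, φ₀ ∈ MaE X₀ a₀ →
      ∃ f : (Fin n → ℂ) → E,
        (f : Filter.Germ (germFilter X (cplxMap ι a₀)) E) ∈ MaE X (cplxMap ι a₀) ∧
        φ₀ = ((fun w => f (cplxMap ι w)) : Filter.Germ (germFilter X₀ a₀) E)) :=
  pullback_well_defined_and_surjective_general ι hiso p hadj X X₀ hX₀ a₀

end PullbackLaurent
end
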